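/- Let k be an algebraically closed field of characteristic 2 and b ∈ k with b³ = 1 and b ≠ 1. Let K ≤ GL₆(k) be the subgroup generated by the permutation matrices of (1 3), (1 4)(2 3)(5 6), (1 3)(4 6), (1 5 3) and (2 6 4) together with the diagonal matrix diag(b, 1, b⁻¹, 1, 1, 1). Then the natural 6-dimensional module k⁶ is a semisimple K-module: every K-invariant subspace of k⁶ admits a K-invariant direct complement. -/
import Mathlib


open Matrix

/-- The invertible permutation matrix associated to a permutation, as an element of `GL n k`. -/
noncomputable def permGL (k : Type*) [Field k] {n : Type*} [DecidableEq n] [Fintype n]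
    (s : Equiv.Perm n) : Matrix.GeneralLinearGroup n k :=
  Matrix.GeneralLinearGroup.mkOfDetNeZero (s.permMatrix k)
    (by
      rw [Matrix.det_permutation]
      rcases Int.units_eq_one_or (Equiv.Perm.sign s) with h | h <;> simp [h])

/-- The invertible diagonal matrix with nonzero diagonal entries `d`, as an element of `GL n k`. -/
noncomputable def diagGL (k : Type*) [Field k] {n : Type*} [DecidableEq n] [Fintype n]
    (d : n → k) (h : ∀ i, d i ≠ 0) : Matrix.GeneralLinearGroup n k :=
  Matrix.GeneralLinearGroup.mkOfDetNeZero (Matrix.diagonal d)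
    (by rw [Matrix.det_diagonal]; exact Finset.prod_ne_zero_iff.mpr fun i _ => h i)


section Helpers

variable {k : Type*} [Field k]

lemma permGL_mulVec (σ : Equiv.Perm (Fin 6)) (v : Fin 6 → k) :
    ((permGL k σ : Matrix.GeneralLinearGroup (Fin 6) k) : Matrix (Fin 6) (Fin 6) k).mulVec v
      = v ∘ ⇑σ := by
  have hcoe : ((permGL k σ : Matrix.GeneralLinearGroup (Fin 6) k) : Matrix (Fin 6) (Fin 6) k)
      = σ.permMatrix k := rfl
  rw [hcoe]
  funext j
  simp [Equiv.Perm.permMatrix, mulVec, dotProduct, PEquiv.toMatrix, Equiv.toPEquiv]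

lemma diagGL_mulVec (d : Fin 6 → k) (h : ∀ i, d i ≠ 0) (v : Fin 6 → k) :
    ((diagGL k d h : Matrix.GeneralLinearGroup (Fin 6) k) : Matrix (Fin 6) (Fin 6) k).mulVec v
      = fun j => d j * v j := by
  have hcoe : ((diagGL k d h : Matrix.GeneralLinearGroup (Fin 6) k) : Matrix (Fin 6) (Fin 6) k)
      = Matrix.diagonal d := rfl
  rw [hcoe]
  funext x
  exact mulVec_diagonal d v x

lemma single_comp_perm (σ : Equiv.Perm (Fin 6)) (i : Fin 6) :
    (Pi.single i (1:k)) ∘ ⇑σ = Pi.single (σ⁻¹ i) 1 := by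
  funext j
  simp only [Function.comp_apply, Pi.single_apply]
  congr 1
  simp [Equiv.Perm.inv_def, eq_comm, Equiv.eq_symm_apply]

lemma single_eq_smul (c : k) (i : Fin 6) :
    Pi.single i c = c • (Pi.single i (1:k) : Fin 6 → k) := by
  funext j; simp [Pi.single_apply, mul_ite]

end Helpers

/-- The natural 6-dimensional module `k⁶` for the subgroup `K ≤ GL₆(k)` generated by the
given permutation matrices and the diagonal matrix is semisimple: every K-invariant subspace has a K-invariant direct complement. -/
theorem stmt_9 (k : Type*) [Field k] [IsAlgClosed k] [CharP k 2]
    (b : k) (hb3 : b ^ 3 = 1) (hb1 : b ≠ 1)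
    (K : Subgroup (Matrix.GeneralLinearGroup (Fin 6) k))
    (hK : K = Subgroup.closure
      { permGL k (c[(0 : Fin 6), 2]),
        permGL k (c[(0 : Fin 6), 3] * c[(1 : Fin 6), 2] * c[(4 : Fin 6), 5]),
        permGL k (c[(0 : Fin 6), 2] * c[(3 : Fin 6), 5]),
        permGL k (c[(0 : Fin 6), 4, 2]),
        permGL k (c[(1 : Fin 6), 5, 3]),
        diagGL k ![b, 1, b⁻¹, 1, 1, 1] (by
          have hb0 : b ≠ 0 := fun h => by simp [h] at hb3
          intro i
          fin_cases i
          exacts [hb0, one_ne_zero, inv_ne_zero hb0, one_ne_zero, one_ne_zero, one_ne_zero]) })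
    (p : Submodule k (Fin 6 → k))
    (hp : ∀ g ∈ K, ∀ v ∈ p, (g : Matrix (Fin 6) (Fin 6) k).mulVec v ∈ p) :
    ∃ q : Submodule k (Fin 6 → k),
      (∀ g ∈ K, ∀ v ∈ q, (g : Matrix (Fin 6) (Fin 6) k).mulVec v ∈ q) ∧ IsCompl p q := by
  classical
  -- basic facts about b
  have hb0 : b ≠ 0 := fun h => by simp [h] at hb3
  have hb1' : b + 1 ≠ 0 := by
    intro h
    apply hb1
    calc b = -1 := eq_neg_of_add_eq_zero_left h
    _ = 1 := CharTwo.neg_eq 1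
  have hbi : b⁻¹ + 1 ≠ 0 := by
    intro h
    have h2 : b * (b⁻¹ + 1) = 0 := by rw [h, mul_zero]
    rw [mul_add, mul_inv_cancel₀ hb0, mul_one] at h2
    exact hb1' (by rwa [add_comm] at h2)
  have hbb : b⁻¹ + b ≠ 0 := by
    intro h
    have h2 : b * (b⁻¹ + b) = 0 := by rw [h, mul_zero]
    rw [mul_add, mul_inv_cancel₀ hb0] at h2
    have hb2 : b * b = 1 := by
      have h3 := eq_neg_of_add_eq_zero_right h2
      rw [h3]; exact CharTwo.neg_eq 1
    apply hb1
    calc b = b * (b * b) := by rw [hb2, mul_one]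
    _ = b ^ 3 := by ring
    _ = 1 := hb3
  -- invariance under generators
  have act : ∀ σ : Equiv.Perm (Fin 6), permGL k σ ∈ K → ∀ v ∈ p, v ∘ ⇑σ ∈ p := by
    intro σ hσ v hv
    have h := hp _ hσ v hv
    rwa [permGL_mulVec] at h
  have m1 : permGL k (c[(0 : Fin 6), 2]) ∈ K := by
    rw [hK]; exact Subgroup.subset_closure (by simp)
  have m2 : permGL k (c[(0 : Fin 6), 3] * c[(1 : Fin 6), 2] * c[(4 : Fin 6), 5]) ∈ K := by
    rw [hK]; exact Subgroup.subset_closure (by simp)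
  have m4 : permGL k (c[(0 : Fin 6), 4, 2]) ∈ K := by
    rw [hK]; exact Subgroup.subset_closure (by simp)
  have m5 : permGL k (c[(1 : Fin 6), 5, 3]) ∈ K := by
    rw [hK]; exact Subgroup.subset_closure (by simp)
  have AD : ∀ v ∈ p, (fun j => (![b, 1, b⁻¹, 1, 1, 1] : Fin 6 → k) j * v j) ∈ p := by
    intro v hv
    have hmem : diagGL k ![b, 1, b⁻¹, 1, 1, 1] (by
        intro i
        fin_cases i
        exacts [hb0, one_ne_zero, inv_ne_zero hb0, one_ne_zero, one_ne_zero, one_ne_zero]) ∈ K := by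
      rw [hK]; exact Subgroup.subset_closure (by simp)
    have h := hp _ hmem v hv
    rwa [diagGL_mulVec] at h
  by_cases hbp : p = ⊥
  · exact ⟨⊤, fun g _ v _ => Submodule.mem_top, hbp ▸ isCompl_bot_top⟩
  refine ⟨⊥, ?_, ?_⟩
  · intro g _ v hv
    rw [Submodule.mem_bot] at hv ⊢
    rw [hv, mulVec_zero]
  suffices htop : p = ⊤ by rw [htop]; exact isCompl_top_bot
  -- p is nonzero and invariant, so it is everything
  obtain ⟨v, hv, hv0⟩ := (Submodule.ne_bot_iff p).1 hbp
  obtain ⟨i, hi⟩ := Function.ne_iff.1 hv0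
  rw [Pi.zero_apply] at hi
  have key : ∃ w ∈ p, w 0 ≠ 0 ∨ w 2 ≠ 0 := by
    fin_cases i
    · exact ⟨v, hv, Or.inl hi⟩
    · refine ⟨v ∘ ⇑(c[(0 : Fin 6), 3] * c[(1 : Fin 6), 2] * c[(4 : Fin 6), 5]), act _ m2 v hv,
        Or.inr ?_⟩
      have h21 : (c[(0 : Fin 6), 3] * c[(1 : Fin 6), 2] * c[(4 : Fin 6), 5]) 2 = 1 := by decide
      simpa [Function.comp, h21] using hi
    · exact ⟨v, hv, Or.inr hi⟩
    · refine ⟨v ∘ ⇑(c[(0 : Fin 6), 3] * c[(1 : Fin 6), 2] * c[(4 : Fin 6), 5]), act _ m2 v hv,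
        Or.inl ?_⟩
      have h03 : (c[(0 : Fin 6), 3] * c[(1 : Fin 6), 2] * c[(4 : Fin 6), 5]) 0 = 3 := by decide
      simpa [Function.comp, h03] using hi
    · refine ⟨v ∘ ⇑(c[(0 : Fin 6), 4, 2]), act _ m4 v hv, Or.inl ?_⟩
      have h04 : (c[(0 : Fin 6), 4, 2]) 0 = 4 := by decide
      simpa [Function.comp, h04] using hi
    · refine ⟨(v ∘ ⇑(c[(0 : Fin 6), 3] * c[(1 : Fin 6), 2] * c[(4 : Fin 6), 5])) ∘
          ⇑(c[(0 : Fin 6), 4, 2]), act _ m4 _ (act _ m2 v hv), Or.inl ?_⟩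
      have h04 : (c[(0 : Fin 6), 4, 2]) 0 = 4 := by decide
      have h45 : (c[(0 : Fin 6), 3] * c[(1 : Fin 6), 2] * c[(4 : Fin 6), 5]) 4 = 5 := by decide
      simpa [Function.comp, h04, h45] using hi
  obtain ⟨w, hw, hw02⟩ := key
  set u0 : k := (b + 1) * w 0 with hu0def
  set u2 : k := (b⁻¹ + 1) * w 2 with hu2def
  set u : Fin 6 → k := ![u0, 0, u2, 0, 0, 0] with hudef
  have humem : u ∈ p := by
    have heq : (fun j => (![b, 1, b⁻¹, 1, 1, 1] : Fin 6 → k) j * w j + w j) = u := by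
      funext j
      fin_cases j <;>
        simp [hudef, hu0def, hu2def, add_mul, one_mul, CharTwo.add_self_eq_zero,
          show ∀ a c e f g h : k, (![a, c, e, f, g, h] : Fin 6 → k) 5 = h from
            fun _ _ _ _ _ _ => rfl]
    exact heq ▸ p.add_mem (AD w hw) hw
  have hzmem : (((b⁻¹ + b) * u2) • (Pi.single (2 : Fin 6) (1:k) : Fin 6 → k)) ∈ p := by
    have h1 : ((fun j => (![b, 1, b⁻¹, 1, 1, 1] : Fin 6 → k) j * u j) + b • u) ∈ p :=
      p.add_mem (AD u humem) (p.smul_mem b humem)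
    have heq : ((fun j => (![b, 1, b⁻¹, 1, 1, 1] : Fin 6 → k) j * u j) + b • u)
        = ((b⁻¹ + b) * u2) • (Pi.single (2 : Fin 6) (1:k) : Fin 6 → k) := by
      funext j
      fin_cases j <;>
        simp [hudef, Pi.single_apply, smul_eq_mul, add_mul, CharTwo.add_self_eq_zero,
          show ∀ a c e f g h : k, (![a, c, e, f, g, h] : Fin 6 → k) 5 = h from
            fun _ _ _ _ _ _ => rfl] <;> ring
    exact heq ▸ h1
  have he02 : Pi.single (0 : Fin 6) (1:k) ∈ p ∧ Pi.single (2 : Fin 6) (1:k) ∈ p := by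
    rcases eq_or_ne (w 2) 0 with h2 | h2
    · have hw0 : w 0 ≠ 0 := hw02.resolve_right (by simp [h2])
      have hu0 : u0 ≠ 0 := mul_ne_zero hb1' hw0
      have hueq : u = u0 • (Pi.single (0 : Fin 6) (1:k) : Fin 6 → k) := by
        funext j
        fin_cases j <;> simp [hudef, hu2def, h2, Pi.single_apply,
          show ∀ a c e f g h : k, (![a, c, e, f, g, h] : Fin 6 → k) 5 = h from
            fun _ _ _ _ _ _ => rfl]
      have he0 : Pi.single (0 : Fin 6) (1:k) ∈ p := by
        have h' := p.smul_mem u0⁻¹ humem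
        rwa [hueq, smul_smul, inv_mul_cancel₀ hu0, one_smul] at h'
      refine ⟨he0, ?_⟩
      have h' := act _ m1 _ he0
      rwa [single_comp_perm, show (c[(0 : Fin 6), 2])⁻¹ (0 : Fin 6) = 2 from by decide] at h'
    · have hu2 : u2 ≠ 0 := mul_ne_zero hbi h2
      have hc : (b⁻¹ + b) * u2 ≠ 0 := mul_ne_zero hbb hu2
      have he2 : Pi.single (2 : Fin 6) (1:k) ∈ p := by
        have h' := p.smul_mem ((b⁻¹ + b) * u2)⁻¹ hzmem
        rwa [smul_smul, inv_mul_cancel₀ hc, one_smul] at h'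
      refine ⟨?_, he2⟩
      have h' := act _ m1 _ he2
      rwa [single_comp_perm, show (c[(0 : Fin 6), 2])⁻¹ (2 : Fin 6) = 0 from by decide] at h'
  obtain ⟨he0, he2⟩ := he02
  have he3 : Pi.single (3 : Fin 6) (1:k) ∈ p := by
    have h' := act _ m2 _ he0
    rwa [single_comp_perm,
      show (c[(0 : Fin 6), 3] * c[(1 : Fin 6), 2] * c[(4 : Fin 6), 5])⁻¹ (0 : Fin 6) = 3
        from by decide] at h'
  have he4 : Pi.single (4 : Fin 6) (1:k) ∈ p := by
    have h' := act _ m4 _ he2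
    rwa [single_comp_perm, show (c[(0 : Fin 6), 4, 2])⁻¹ (2 : Fin 6) = 4 from by decide] at h'
  have he5 : Pi.single (5 : Fin 6) (1:k) ∈ p := by
    have h' := act _ m5 _ he3
    rwa [single_comp_perm, show (c[(1 : Fin 6), 5, 3])⁻¹ (3 : Fin 6) = 5 from by decide] at h'
  have he1 : Pi.single (1 : Fin 6) (1:k) ∈ p := by
    have h' := act _ m5 _ he5
    rwa [single_comp_perm, show (c[(1 : Fin 6), 5, 3])⁻¹ (5 : Fin 6) = 1 from by decide] at h'
  have hall : ∀ i : Fin 6, Pi.single i (1:k) ∈ p := by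
    intro i; fin_cases i <;> assumption
  rw [Submodule.eq_top_iff']
  intro x
  have hx : x = ∑ i, Pi.single i (x i) := (Finset.univ_sum_single x).symm
  rw [hx]
  refine Submodule.sum_mem _ fun i _ => ?_
  rw [single_eq_smul]
  exact p.smul_mem _ (hall i)
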